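/- arXiv:1403.0263 — 4 statements merged into one kernel-verified Lean document; each statement's English description precedes it below -/
import Mathlib

section
/- The set of real numbers a for which the family (√(k² + a²))_{k∈ℕ} is linearly dependent over ℚ (i.e., there exist finitely many indices k_1 < … < k_m and rational numbers α_1, …, α_m, not all zero, with ∑_j α_j·√(k_j² + a²) = 0) is countable. In particular, for almost every real a the family (√(k² + a²))_{k∈ℕ} is linearly independent over ℚ. -/
/-!
In the variable `u = a²`, a nontrivial combination `F u = ∑ α_j √(c_j + u)` with distinct
`c_j = k_j² ≥ 0` is real-analytic on `(0, ∞)`, so it has countably many zeros there unless it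
vanishes identically. It does not: the `n`-th derivative of `√(c + u)` is a nonzero multiple of
`(c + u)^(1/2 - n)`, so `F ≡ 0` would give `∑ α_j √(c_j + 1) x_j ^ n = 0` for all `n`, with
distinct `x_j = (c_j + 1)⁻¹`, a nonsingular Vandermonde system. Countably many choices of indices
and rational coefficients then give a countable, hence null, exceptional set of `a`.
-/

open Set

theorem AnalyticOnNhd.countable_inter_zeros {𝕜 E : Type*} [NontriviallyNormedField 𝕜]
    [SecondCountableTopology 𝕜] [NormedAddCommGroup E] [NormedSpace 𝕜 E] {f : 𝕜 → E}
    {U : Set 𝕜} (hf : AnalyticOnNhd 𝕜 f U) (hU : IsPreconnected U) (hf0 : ¬EqOn f 0 U) :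
    ({x | f x = 0} ∩ U).Countable :=
  (HereditarilyLindelofSpace.isLindelof _).countable_of_isDiscrete <|
    isDiscrete_of_codiscreteWithin <|
      (hf.eqOn_zero_or_eventually_ne_zero_of_preconnected hU).resolve_left hf0

section ShiftedPowers

variable {m : ℕ} (c α : Fin m → ℝ)

theorem hasDerivAt_sum_mul_add_rpow (hc : ∀ j, 0 ≤ c j) (b : ℝ) {u : ℝ} (hu : 0 < u) :
    HasDerivAt (fun v => ∑ j, α j * (c j + v) ^ b) (b * ∑ j, α j * (c j + u) ^ (b - 1)) u := by
  rw [Finset.mul_sum]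
  refine HasDerivAt.fun_sum fun j _ => ?_
  have hpos : 0 < c j + u := by linarith [hc j]
  have hd := ((hasDerivAt_id' u).const_add (c j)).rpow_const (p := b) (Or.inl hpos.ne')
  exact (hd.const_mul (α j)).congr_deriv (by ring)

theorem sum_mul_add_rpow_sub_one_eq_zero (hc : ∀ j, 0 ≤ c j) {b : ℝ} (hb : b ≠ 0)
    (h : ∀ u > 0, ∑ j, α j * (c j + u) ^ b = 0) :
    ∀ u > 0, ∑ j, α j * (c j + u) ^ (b - 1) = 0 := by
  intro u hu
  have hzero : HasDerivAt (fun v => ∑ j, α j * (c j + v) ^ b) 0 u :=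
    (hasDerivAt_const u 0).congr_of_eventuallyEq <|
      Filter.eventually_of_mem (Ioi_mem_nhds hu) h
  exact (mul_eq_zero.1 ((hasDerivAt_sum_mul_add_rpow c α hc b hu).unique hzero)).resolve_left hb

theorem sum_mul_add_rpow_half_sub_eq_zero (hc : ∀ j, 0 ≤ c j)
    (h : ∀ u > 0, ∑ j, α j * √(c j + u) = 0) (n : ℕ) :
    ∀ u > 0, ∑ j, α j * (c j + u) ^ ((1 / 2 : ℝ) - n) = 0 := by
  induction n with
  | zero => simpa [Real.sqrt_eq_rpow] using h
  | succ n ih =>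
    have hb : (1 / 2 : ℝ) - n ≠ 0 := by
      intro h0
      have : 2 * n = 1 := by exact_mod_cast (by linarith : (2 * n : ℝ) = 1)
      omega
    simpa [sub_sub] using sum_mul_add_rpow_sub_one_eq_zero c α hc hb ih

theorem eq_zero_of_sum_mul_sqrt_add_eq_zero (hc : Function.Injective c) (hc0 : ∀ j, 0 ≤ c j)
    (h : ∀ u > 0, ∑ j, α j * √(c j + u) = 0) : α = 0 := by
  have hpos j : 0 < c j + 1 := by linarith [hc0 j]
  have hmoments (n : Fin m) : ∑ j, α j * √(c j + 1) * (c j + 1)⁻¹ ^ (n : ℕ) = 0 := by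
    rw [← sum_mul_add_rpow_half_sub_eq_zero c α hc0 h n 1 one_pos]
    refine Finset.sum_congr rfl fun j _ => ?_
    rw [Real.rpow_sub (hpos j), Real.rpow_natCast, Real.sqrt_eq_rpow, inv_pow]
    ring
  have hinj : Function.Injective fun j => (c j + 1)⁻¹ :=
    inv_injective.comp ((add_left_injective 1).comp hc)
  funext j
  have := congrFun (Matrix.eq_zero_of_forall_pow_sum_mul_pow_eq_zero hinj hmoments) j
  exact (mul_eq_zero.1 this).resolve_right (Real.sqrt_pos.2 (hpos j)).ne'

theorem countable_setOf_sum_mul_sqrt_add_eq_zero_inter_Ioi (hc : Function.Injective c)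
    (hc0 : ∀ j, 0 ≤ c j) (hα : α ≠ 0) :
    ({u | ∑ j, α j * √(c j + u) = 0} ∩ Ioi 0).Countable := by
  have hF : AnalyticOnNhd ℝ (fun u => ∑ j, α j * √(c j + u)) (Ioi 0) := fun u hu =>
    ContDiffAt.analyticAt <| ContDiffAt.sum fun j _ => contDiffAt_const.mul <|
      (contDiffAt_const.add contDiffAt_id).sqrt (add_pos_of_nonneg_of_pos (hc0 j) hu).ne'
  exact hF.countable_inter_zeros isPreconnected_Ioi fun h0 =>
    hα (eq_zero_of_sum_mul_sqrt_add_eq_zero c α hc hc0 fun u hu => h0 hu)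

end ShiftedPowers

theorem Set.Countable.preimage_sq {s : Set ℝ} (hs : s.Countable) :
    ((· ^ 2) ⁻¹' s).Countable := by
  refine ((hs.image (√·)).union (hs.image (-√·))).mono fun a ha => ?_
  rcases le_total 0 a with h | h
  · exact Or.inl ⟨a ^ 2, ha, Real.sqrt_sq h⟩
  · exact Or.inr ⟨a ^ 2, ha, by
      show -√(a ^ 2) = a
      rw [Real.sqrt_sq_eq_abs, abs_of_nonpos h, neg_neg]⟩

theorem countable_setOf_sum_mul_sqrt_sq_add_sq_eq_zero {m : ℕ} {k : Fin m → ℕ}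
    (hk : Function.Injective k) {α : Fin m → ℝ} (hα : α ≠ 0) :
    {a : ℝ | ∑ j, α j * √((k j : ℝ) ^ 2 + a ^ 2) = 0}.Countable := by
  have hc : Function.Injective fun j => (k j : ℝ) ^ 2 := fun i j h => hk (by simpa using h)
  refine ((countable_setOf_sum_mul_sqrt_add_eq_zero_inter_Ioi _ α hc (fun j => by positivity)
    hα).insert 0).preimage_sq.mono fun a ha => ?_
  rcases (sq_nonneg a).eq_or_lt with h | h
  · exact Or.inl h.symm
  · exact Or.inr ⟨ha, h⟩

theorem linearIndependent_of_forall_sum_strictMono_eq_zero {ι R M : Type*} [LinearOrder ι]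
    [Ring R] [AddCommGroup M] [Module R M] {v : ι → M}
    (h : ∀ (m : ℕ) (k : Fin m → ι) (α : Fin m → R), StrictMono k →
      ∑ j, α j • v (k j) = 0 → α = 0) :
    LinearIndependent R v := by
  rw [linearIndependent_iff']
  intro s g hsum i hi
  let e := s.orderIsoOfFin rfl
  have hsum' : ∑ j, g (e j) • v (e j) = 0 := by
    rw [← hsum, ← Finset.sum_coe_sort s]
    exact e.toEquiv.sum_comp fun x : s => g x • v x
  have := h _ _ _ (Subtype.strictMono_coe _ |>.comp e.strictMono) hsum'
  simpa [e] using congrFun this (e.symm ⟨i, hi⟩)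

open MeasureTheory

theorem stmt_4 :
    {a : ℝ | ∃ (m : ℕ) (k : Fin m → ℕ) (α : Fin m → ℚ), StrictMono k ∧
        (∃ j, α j ≠ 0) ∧
        ∑ j, (α j : ℝ) * Real.sqrt ((k j : ℝ) ^ 2 + a ^ 2) = 0}.Countable ∧
    ∀ᵐ a ∂(volume : Measure ℝ),
      LinearIndependent ℚ (fun k : ℕ => Real.sqrt ((k : ℝ) ^ 2 + a ^ 2)) := by
  set bad := {a : ℝ | ∃ (m : ℕ) (k : Fin m → ℕ) (α : Fin m → ℚ), StrictMono k ∧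
    (∃ j, α j ≠ 0) ∧ ∑ j, (α j : ℝ) * Real.sqrt ((k j : ℝ) ^ 2 + a ^ 2) = 0}
  have hbad : bad.Countable := by
    simp only [bad, ofPred_exists]
    refine countable_iUnion fun m => countable_iUnion fun k => countable_iUnion fun α => ?_
    by_cases hkα : StrictMono k ∧ ∃ j, α j ≠ 0
    · obtain ⟨hk, j, hj⟩ := hkα
      refine (countable_setOf_sum_mul_sqrt_sq_add_sq_eq_zero hk.injective
        (α := fun j => (α j : ℝ)) (Function.ne_iff.2 ⟨j, by simpa using hj⟩)).mono ?_
      exact fun a ha => ha.2.2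
    · exact countable_empty.mono fun a ha => hkα ⟨ha.1, ha.2.1⟩
  refine ⟨hbad, (measure_eq_zero_iff_ae_notMem.1 (hbad.measure_zero volume)).mono fun a ha => ?_⟩
  refine linearIndependent_of_forall_sum_strictMono_eq_zero fun m k α hk hsum => ?_
  by_contra hα
  exact ha ⟨m, k, α, hk, Function.ne_iff.1 hα, by simpa [Rat.smul_def] using hsum⟩
end

section
/- If a is a transcendental real number, then the family (√(k² + a²))_{k∈ℕ} is linearly independent over ℚ: whenever k_1 < … < k_m are natural numbers and α_1, …, α_m are rational numbers with ∑_{j=1}^m α_j·√(k_j² + a²) = 0, all α_j are zero. -/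
/-!
For `u > 0` the product of the `2^m` conjugates `∑ j, ±α j * √(k j ^ 2 + u)` is `N(u)` for a
polynomial `N` with rational coefficients: it is the determinant of multiplication by
`∑ j, α j * Y j` on `ℚ[u][Y] ⧸ (Y j ^ 2 - k j ^ 2 - u)`, diagonalised by the matrix of conjugates
of the monomials. As `N` vanishes at the transcendental number `a ^ 2`, `N = 0`, so at every
`u > 0` some conjugate vanishes, and by Baire one conjugate vanishes on an open set. Differentiating
`r` times there gives `∑ j, ±α j * (k j ^ 2 + u) ^ (1/2 - r) = 0` for all `r`, and a Vandermonde
determinant forces `α = 0`.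
-/

open Finset Matrix Polynomial

theorem eq_zero_of_sum_mul_pow_eq_zero {R : Type*} [CommRing R] [IsDomain R] {n : ℕ}
    {x d : Fin n → R} (hx : Function.Injective x) (h : ∀ r : Fin n, ∑ j, d j * x j ^ (r : ℕ) = 0) :
    d = 0 := by
  refine eq_zero_of_mulVec_eq_zero (M := (vandermonde x)ᵀ) ?_ ?_
  · rwa [det_transpose, det_vandermonde_ne_zero_iff]
  · ext r
    simpa [mulVec, dotProduct, mul_comm] using h r

section RpowSums

variable {ι : Type*} [Fintype ι] {s : Set ℝ} {κ c : ι → ℝ} {e : ℝ}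

theorem mul_sum_mul_rpow_sub_one_eq_zero (hs : IsOpen s) (hpos : ∀ u ∈ s, ∀ j, 0 < κ j + u)
    (h : ∀ u ∈ s, ∑ j, c j * (κ j + u) ^ e = 0) {u : ℝ} (hu : u ∈ s) :
    e * ∑ j, c j * (κ j + u) ^ (e - 1) = 0 := by
  have hderiv : HasDerivAt (fun v => ∑ j, c j * (κ j + v) ^ e)
      (e * ∑ j, c j * (κ j + u) ^ (e - 1)) u := by
    rw [mul_sum]
    refine HasDerivAt.fun_sum fun j _ => ?_
    exact ((((hasDerivAt_id' u).const_add (κ j)).rpow_const (p := e)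
      (Or.inl (hpos u hu j).ne')).const_mul (c j)).congr_deriv (by ring)
  have hzero : (fun v => ∑ j, c j * (κ j + v) ^ e) =ᶠ[nhds u] fun _ => 0 :=
    Filter.eventually_of_mem (hs.mem_nhds hu) h
  exact hderiv.unique ((hasDerivAt_const u 0).congr_of_eventuallyEq hzero)

theorem sum_mul_rpow_sub_natCast_eq_zero (hs : IsOpen s) (hpos : ∀ u ∈ s, ∀ j, 0 < κ j + u)
    (he : ∀ r : ℕ, e ≠ r) (h : ∀ u ∈ s, ∑ j, c j * (κ j + u) ^ e = 0) (r : ℕ) :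
    ∀ u ∈ s, ∑ j, c j * (κ j + u) ^ (e - r) = 0 := by
  induction r with
  | zero => simpa using h
  | succ r ih =>
    intro u hu
    have hstep := mul_sum_mul_rpow_sub_one_eq_zero hs hpos ih hu
    rw [sub_sub, ← Nat.cast_add_one] at hstep
    exact (mul_eq_zero.1 hstep).resolve_left (sub_ne_zero.2 (he r))

theorem eq_zero_of_sum_mul_rpow_eq_zero {n : ℕ} {κ c : Fin n → ℝ} (hκ : Function.Injective κ)
    (hs : IsOpen s) (hne : s.Nonempty) (hpos : ∀ u ∈ s, ∀ j, 0 < κ j + u)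
    (he : ∀ r : ℕ, e ≠ r) (h : ∀ u ∈ s, ∑ j, c j * (κ j + u) ^ e = 0) : c = 0 := by
  obtain ⟨u, hu⟩ := hne
  have hbase j : κ j + u ≠ 0 := (hpos u hu j).ne'
  have hmoments (r : Fin n) :
      ∑ j, c j * (κ j + u) ^ e * (κ j + u)⁻¹ ^ (r : ℕ) = 0 := by
    rw [← sum_mul_rpow_sub_natCast_eq_zero hs hpos he h r u hu]
    refine sum_congr rfl fun j _ => ?_
    rw [Real.rpow_sub_natCast (hbase j), inv_pow, mul_assoc, div_eq_mul_inv]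
  have hinj : Function.Injective fun j => (κ j + u)⁻¹ :=
    fun i j hij => hκ (add_right_cancel (inv_injective hij))
  ext j
  have := congrFun (eq_zero_of_sum_mul_pow_eq_zero hinj hmoments) j
  exact (mul_eq_zero.1 this).resolve_right (Real.rpow_pos_of_pos (hpos u hu j) e).ne'

theorem eq_zero_of_sum_mul_sqrt_eq_zero {n : ℕ} {κ c : Fin n → ℝ} (hκ : Function.Injective κ)
    (hs : IsOpen s) (hne : s.Nonempty) (hpos : ∀ u ∈ s, ∀ j, 0 < κ j + u)
    (h : ∀ u ∈ s, ∑ j, c j * √(κ j + u) = 0) : c = 0 := by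
  refine eq_zero_of_sum_mul_rpow_eq_zero hκ hs hne hpos (e := 1 / 2) (fun r hr => ?_) ?_
  · have : (2 * r : ℕ) = 1 := by exact_mod_cast (by linarith : (2 : ℝ) * r = 1)
    omega
  · simpa only [Real.sqrt_eq_rpow] using h

end RpowSums

theorem exists_isOpen_forall_eq_zero_of_forall_exists {X M ι : Type*} [TopologicalSpace X]
    [R1Space X] [LocallyCompactSpace X] [TopologicalSpace M] [T1Space M] [Zero M] [Finite ι]
    {s : Set X} (hs : IsOpen s) (hne : s.Nonempty) {f : ι → X → M}
    (hf : ∀ i, ContinuousOn (f i) s) (h : ∀ x ∈ s, ∃ i, f i x = 0) :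
    ∃ i, ∃ t ⊆ s, IsOpen t ∧ t.Nonempty ∧ ∀ x ∈ t, f i x = 0 := by
  have := hs.locallyCompactSpace
  have : BaireSpace s := BaireSpace.of_t2Space_locallyCompactSpace
  have : Nonempty s := hne.to_subtype
  obtain ⟨i, hi⟩ := nonempty_interior_of_iUnion_of_closed
    (f := fun i => {x : s | f i x = 0}) (fun i => isClosed_singleton.preimage (hf i).domRestrict)
    (Set.iUnion_eq_univ_iff.2 fun x => h x x.2)
  refine ⟨i, Subtype.val '' interior {x : s | f i x = 0}, Subtype.coe_image_subset s _,
    hs.isOpenMap_subtype_val _ isOpen_interior, hi.image _, ?_⟩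
  rintro _ ⟨x, hx, rfl⟩
  exact interior_subset (s := {x : s | f i x = 0}) hx

section Conjugates

variable {ι R : Type*} [DecidableEq ι] [CommRing R]

def conjSign (ε : Finset ι) (j : ι) : R := if j ∈ ε then -1 else 1

theorem conjSign_mul_self (ε : Finset ι) (j : ι) : conjSign ε j * conjSign ε j = (1 : R) := by
  unfold conjSign
  split_ifs <;> simp

variable [Fintype ι]

def conjugate (c y : ι → R) (ε : Finset ι) : R := ∑ j, conjSign ε j * c j * y j

/-- The matrix of multiplication by `∑ j, c j * Y j` in the basis `(∏ j ∈ S, Y j)_S` of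
`R[Y] ⧸ (Y j ^ 2 - s j)`. -/
def sqrtMulMatrix (c s : ι → R) : Matrix (Finset ι) (Finset ι) R := fun S T =>
  ∑ j, c j * if j ∈ S then (if T = S.erase j then s j else 0) else (if T = insert j S then 1 else 0)

/-- Column `ε` lists the monomials `∏ j ∈ S, Y j` evaluated at `Y j = ±y j`, negated for `j ∈ ε`. -/
def conjMatrix (y : ι → R) : Matrix (Finset ι) (Finset ι) R := fun S ε =>
  ∏ j ∈ S, conjSign ε j * y j

variable (ι R) in
def signMatrix : Matrix (Finset ι) (Finset ι) R := fun S ε => ∏ j ∈ S, conjSign ε j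

theorem conjMatrix_eq_diagonal_mul_signMatrix (y : ι → R) :
    conjMatrix y = diagonal (fun S => ∏ j ∈ S, y j) * signMatrix ι R := by
  ext S ε
  simp only [conjMatrix, signMatrix, diagonal_mul, prod_mul_distrib, mul_comm]

theorem signMatrix_transpose_mul_self :
    (signMatrix ι R)ᵀ * signMatrix ι R = (2 ^ Fintype.card ι : R) • 1 := by
  ext ε ε'
  have hsum : ((signMatrix ι R)ᵀ * signMatrix ι R) ε ε' =
      ∏ j, (1 + conjSign ε j * conjSign ε' j) := by
    rw [prod_one_add, powerset_univ, mul_apply]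
    simp only [transpose_apply, signMatrix, prod_mul_distrib]
  rw [hsum, Matrix.smul_apply, one_apply, smul_eq_mul]
  split_ifs with h
  · simp [h, conjSign_mul_self, one_add_one_eq_two]
  · obtain ⟨j, hj⟩ : ∃ j, ¬(j ∈ ε ↔ j ∈ ε') := by
      by_contra! hall
      exact h (Finset.ext hall)
    rw [mul_zero]
    refine prod_eq_zero (mem_univ j) ?_
    unfold conjSign
    split_ifs <;> simp_all

theorem det_signMatrix_ne_zero [IsDomain R] [NeZero (2 : R)] : (signMatrix ι R).det ≠ 0 := by
  have h := congrArg det (signMatrix_transpose_mul_self (ι := ι) (R := R))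
  rw [det_mul, det_transpose, det_smul, det_one, mul_one] at h
  intro h0
  rw [h0, mul_zero] at h
  exact pow_ne_zero _ (pow_ne_zero _ (two_ne_zero (α := R))) h.symm

theorem det_conjMatrix_ne_zero [IsDomain R] [NeZero (2 : R)] {y : ι → R} (hy : ∀ j, y j ≠ 0) :
    (conjMatrix y).det ≠ 0 := by
  rw [conjMatrix_eq_diagonal_mul_signMatrix, det_mul, det_diagonal]
  exact mul_ne_zero (prod_ne_zero_iff.2 fun S _ => prod_ne_zero_iff.2 fun j _ => hy j)
    det_signMatrix_ne_zero

theorem sqrtMulMatrix_mul_conjMatrix {c s y : ι → R} (hy : ∀ j, y j ^ 2 = s j) :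
    sqrtMulMatrix c s * conjMatrix y = conjMatrix y * diagonal (conjugate c y) := by
  ext S ε
  have hterm (j : ι) : ∑ T, (if j ∈ S then (if T = S.erase j then s j else 0)
      else (if T = insert j S then 1 else 0)) * conjMatrix y T ε =
      conjSign ε j * y j * conjMatrix y S ε := by
    by_cases hj : j ∈ S
    · simp only [hj, if_true, ite_mul, zero_mul, sum_ite_eq', mem_univ, conjMatrix]
      rw [← mul_prod_erase S _ hj, ← mul_assoc, mul_mul_mul_comm, conjSign_mul_self, one_mul,
        ← sq, hy]
    · simp only [hj, ite_mul, one_mul, zero_mul, sum_ite_eq', mem_univ, conjMatrix,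
        prod_insert hj, ↓reduceIte]
  rw [mul_diagonal, conjugate, mul_sum, mul_apply]
  simp only [sqrtMulMatrix, sum_mul]
  rw [sum_comm]
  refine sum_congr rfl fun j _ => ?_
  simp only [mul_assoc, ← mul_sum, hterm]
  ring

theorem det_sqrtMulMatrix [IsDomain R] [NeZero (2 : R)] {c s y : ι → R} (hy0 : ∀ j, y j ≠ 0)
    (hy : ∀ j, y j ^ 2 = s j) : (sqrtMulMatrix c s).det = ∏ ε, conjugate c y ε := by
  have h := congrArg det (sqrtMulMatrix_mul_conjMatrix (c := c) hy)
  rw [det_mul, det_mul, det_diagonal, mul_comm] at h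
  exact mul_left_cancel₀ (det_conjMatrix_ne_zero hy0) h

theorem sqrtMulMatrix_map {S : Type*} [CommRing S] (f : R →+* S) (c s : ι → R) :
    (sqrtMulMatrix c s).map f = sqrtMulMatrix (f ∘ c) (f ∘ s) := by
  ext
  simp [sqrtMulMatrix, apply_ite f]

noncomputable def normPoly (α κ : ι → R) : R[X] :=
  (sqrtMulMatrix (fun j => C (α j)) (fun j => C (κ j) + X)).det

theorem aeval_normPoly [Algebra R ℝ] (α κ : ι → R) {u : ℝ}
    (hu : ∀ j, 0 < algebraMap R ℝ (κ j) + u) :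
    aeval u (normPoly α κ) =
      ∏ ε, conjugate (fun j => algebraMap R ℝ (α j)) (fun j => √(algebraMap R ℝ (κ j) + u)) ε := by
  rw [normPoly, ← AlgHom.coe_toRingHom, RingHom.map_det, RingHom.mapMatrix_apply,
    sqrtMulMatrix_map]
  convert det_sqrtMulMatrix (fun j => (Real.sqrt_pos.2 (hu j)).ne') fun j => ?_ using 3
  · ext j
    simp
  · simp [Real.sq_sqrt (hu j).le]

end Conjugates

theorem stmt_5 (a : ℝ) (ha : Transcendental ℚ a)
    (m : ℕ) (k : Fin m → ℕ) (hk : StrictMono k) (α : Fin m → ℚ)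
    (h : ∑ j, (α j : ℝ) * Real.sqrt ((k j : ℝ) ^ 2 + a ^ 2) = 0) :
    ∀ j, α j = 0 := by
  set f : Finset (Fin m) → ℝ → ℝ := fun ε u =>
    conjugate (fun j => (α j : ℝ)) (fun j => √((k j : ℝ) ^ 2 + u)) ε
  have hnorm {u : ℝ} (hu : 0 < u) : aeval u (normPoly α fun j => (k j : ℚ) ^ 2) = ∏ ε, f ε u := by
    rw [aeval_normPoly _ _ fun j => by rw [eq_ratCast]; positivity]
    simp [f]
  have ha0 : a ≠ 0 := by
    rintro rfl
    exact ha isAlgebraic_zero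
  have hP : normPoly α (fun j => (k j : ℚ) ^ 2) = 0 := by
    by_contra hP
    refine ha.pow two_pos ⟨_, hP, ?_⟩
    rw [hnorm (by positivity)]
    exact prod_eq_zero (mem_univ ∅) (by simpa [f, conjugate, conjSign] using h)
  obtain ⟨ε, t, hts, ht, htne, hε⟩ := exists_isOpen_forall_eq_zero_of_forall_exists
    isOpen_Ioi ⟨1, one_pos⟩ (f := f) (fun ε => by unfold f conjugate; fun_prop) fun u hu => by
      obtain ⟨ε, -, hε⟩ := prod_eq_zero_iff.1 ((hnorm hu).symm.trans (by rw [hP, map_zero]))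
      exact ⟨ε, hε⟩
  have hinj : Function.Injective fun j => (k j : ℝ) ^ 2 := fun i j hij =>
    hk.injective (Nat.pow_left_injective two_ne_zero (by simpa using hij))
  have hc := eq_zero_of_sum_mul_sqrt_eq_zero (c := fun j => conjSign ε j * (α j : ℝ)) hinj ht htne
    (fun u hu j => by have : 0 < u := hts hu; positivity) fun u hu => by
      simpa [f, conjugate, mul_assoc] using hε u hu
  intro j
  by_cases hj : j ∈ ε <;> simpa [conjSign, hj] using congrFun hc j
end

section
/- Let n ≥ 1 and let α_1, …, α_n be rational numbers such that ∑_{j=1}^n α_j·√(j² + x²) = 0 for every real number x. Then α_j = 0 for all j = 1, …, n. Equivalently, the real-valued functions x ↦ √(j² + x²), j = 1, …, n, are linearly independent over ℚ. -/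
/-! Put `t = x²`: the hypothesis says that `∑ j, α j * (t + (j + 1)²) ^ (1/2)` vanishes for
`t > 0`. Its `r`-th derivative at `t = 1` is `(1/2)(1/2 - 1)⋯(1/2 - r + 1)` times
`∑ j, α j * (1 + (j + 1)²) ^ (1/2) * ((1 + (j + 1)²)⁻¹) ^ r`, and the Pochhammer factor is nonzero
because `1/2` is not a natural number. For `r < n` this is a Vandermonde system in the distinct
nodes `(1 + (j + 1)²)⁻¹`, so every `α j` vanishes. -/

open Filter Topology

theorem iteratedDeriv_rpow_add_const (p c t : ℝ) (r : ℕ) :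
    iteratedDeriv r (fun s ↦ (s + c) ^ p) t = (descPochhammer ℝ r).eval p * (t + c) ^ (p - r) := by
  rw [iteratedDeriv_comp_add_const r (fun s ↦ s ^ p), iteratedDeriv_eq_iterate]
  exact Real.iter_deriv_rpow_const p (t + c) r

theorem descPochhammer_eval_ne_zero {p : ℝ} (hp : ∀ m : ℕ, p ≠ m) (r : ℕ) :
    (descPochhammer ℝ r).eval p ≠ 0 := by
  rw [descPochhammer_eval_eq_prod_range, Finset.prod_ne_zero_iff]
  exact fun m _ ↦ sub_ne_zero.2 (hp m)

theorem eq_zero_of_sum_mul_rpow_add_eventuallyEq_zero {n : ℕ} {p : ℝ} (hp : ∀ m : ℕ, p ≠ m)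
    {c : Fin n → ℝ} (hc : Function.Injective c) {a : Fin n → ℝ} {t₀ : ℝ}
    (ht₀ : ∀ k, 0 < t₀ + c k) (h : (fun t ↦ ∑ k, a k * (t + c k) ^ p) =ᶠ[𝓝 t₀] 0) :
    a = 0 := by
  have hderiv (r : ℕ) : (descPochhammer ℝ r).eval p *
      ∑ k, a k * (t₀ + c k) ^ p * ((t₀ + c k)⁻¹) ^ r = 0 := by
    have hsmooth : ∀ k ∈ Finset.univ, ContDiffAt ℝ r (fun t ↦ a k * (t + c k) ^ p) t₀ :=
      fun k _ ↦ contDiffAt_const.mul <| (Real.contDiffAt_rpow_const_of_ne (ht₀ k).ne').comp t₀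
        (contDiffAt_id.add contDiffAt_const)
    have hr := Filter.EventuallyEq.iteratedDeriv_eq r h
    rw [iteratedDeriv_fun_sum hsmooth] at hr
    simp only [iteratedDeriv_const_mul_field, iteratedDeriv_rpow_add_const] at hr
    calc _ = ∑ k, a k * ((descPochhammer ℝ r).eval p * (t₀ + c k) ^ (p - r)) := by
          rw [Finset.mul_sum]
          refine Finset.sum_congr rfl fun k _ ↦ ?_
          rw [Real.rpow_sub (ht₀ k), Real.rpow_natCast, inv_pow]
          ring
      _ = iteratedDeriv r 0 t₀ := hr
      _ = 0 := by simp only [iteratedDeriv_const_zero]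
  have hv : (fun k ↦ a k * (t₀ + c k) ^ p) = 0 := by
    refine Matrix.eq_zero_of_forall_pow_sum_mul_pow_eq_zero (f := fun k ↦ (t₀ + c k)⁻¹) ?_
      fun r ↦ ?_
    · exact fun i j hij ↦ hc (add_left_cancel (inv_injective hij))
    · exact (mul_eq_zero.1 (hderiv r)).resolve_left (descPochhammer_eval_ne_zero hp r)
  funext k
  exact (mul_eq_zero.1 (congrFun hv k)).resolve_right (Real.rpow_pos_of_pos (ht₀ k) p).ne'

theorem stmt_6_general (n : ℕ) (α : Fin n → ℚ)
    (h : ∀ x : ℝ,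
      ∑ j : Fin n, (α j : ℝ) * Real.sqrt (((j : ℕ) + 1 : ℝ) ^ 2 + x ^ 2) = 0) :
    ∀ j, α j = 0 := by
  have hhalf (m : ℕ) : (1 / 2 : ℝ) ≠ m := by
    intro hm
    have : (2 * m : ℝ) = 1 := by linarith
    norm_cast at this
    omega
  have hc : Function.Injective fun j : Fin n ↦ (((j : ℕ) + 1 : ℝ) ^ 2) := fun i j hij ↦ by
    have := (pow_left_inj₀ (by positivity) (by positivity) two_ne_zero).1 hij
    exact Fin.ext (by exact_mod_cast add_right_cancel this)
  have hzero : (fun t ↦ ∑ j, (α j : ℝ) * (t + ((j : ℕ) + 1 : ℝ) ^ 2) ^ (1 / 2 : ℝ)) =ᶠ[𝓝 1] 0 := by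
    filter_upwards [eventually_gt_nhds zero_lt_one] with t ht
    have hx := h √t
    rw [Real.sq_sqrt ht.le] at hx
    simpa only [add_comm, Real.sqrt_eq_rpow, Pi.zero_apply] using hx
  have hα := eq_zero_of_sum_mul_rpow_add_eventuallyEq_zero hhalf hc (fun j ↦ by positivity) hzero
  exact fun j ↦ by simpa using congrFun hα j

theorem stmt_6 (n : ℕ) (hn : 1 ≤ n) (α : Fin n → ℚ)
    (h : ∀ x : ℝ,
      ∑ j : Fin n, (α j : ℝ) * Real.sqrt (((j : ℕ) + 1 : ℝ) ^ 2 + x ^ 2) = 0) :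
    ∀ j, α j = 0 :=
  stmt_6_general n α h
end

section
/- Let a, b > 0 and c, d ∈ ℝ. Then there exists ε > 0 such that the sum #{(n, m) ∈ ℤ² : (c + n·a)² + (d + m·b)² ≤ λ²} + #{(n, m) ∈ ℕ² : (n, m) ≠ (0, 0) and (n·a)² + (m·b)² ≤ λ²} equals (5π/(4ab))·λ²·(1 + O(λ^{-ε})) as λ → ∞. -/
/-!
Give each lattice point the half-open cell of area `a b` having it as lower left corner; the
cells are disjoint and have diameter at most `a + b`. The cells of the points at distance `≤ λ`
from the origin cover the disk of radius `λ - (a + b)` and lie in the disk of radius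
`λ + (a + b)`, so there are `π λ² / (a b) + O(λ)` such points. For the loops the same argument
runs in the first quadrant, whose quarter disks have area `π r² / 4` by reflecting in the two
axes; this gives `π λ² / (4 a b) + O(λ)`, and the total is `5 π λ² / (4 a b) (1 + O(λ⁻¹))`.
-/

open MeasureTheory Set Real Filter Asymptotics Function Complex
open scoped ENNReal

theorem Complex.volume_reProdIm (s t : Set ℝ) : volume (s ×ℂ t) = volume s * volume t := by
  rw [← preimage_equivRealProd_prod, ← Measure.prod_prod, ← Measure.volume_eq_prod]
  exact volume_preserving_equiv_real_prod.measure_preimage_equiv (s ×ˢ t)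

theorem Complex.norm_le_iff_sq_le {z : ℂ} {r : ℝ} (hr : 0 ≤ r) :
    ‖z‖ ≤ r ↔ z.re ^ 2 + z.im ^ 2 ≤ r ^ 2 := by
  rw [← sq_le_sq₀ (norm_nonneg z) hr, Complex.sq_norm, normSq_apply, ← sq, ← sq]

theorem Complex.volume_setOf_re_eq_zero : volume {z : ℂ | z.re = 0} = 0 :=
  Measure.addHaar_submodule volume (LinearMap.ker reLm) fun h => by
    simpa using (SetLike.ext_iff.mp h 1).mpr trivial

theorem Complex.volume_setOf_im_eq_zero : volume {z : ℂ | z.im = 0} = 0 :=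
  Measure.addHaar_submodule volume (LinearMap.ker imLm) fun h => by
    simpa using (SetLike.ext_iff.mp h I).mpr trivial

theorem Complex.volume_closedBall_zero {r : ℝ} (hr : 0 ≤ r) :
    volume (Metric.closedBall (0 : ℂ) r) = ENNReal.ofReal (π * r ^ 2) := by
  rw [Complex.volume_closedBall, ← ENNReal.ofReal_pow hr, ← NNReal.coe_real_pi,
    ENNReal.ofReal_coe_nnreal.symm, mul_comm, ← ENNReal.ofReal_mul (by positivity)]

theorem two_mul_measure_inter_setOf_nonneg {α : Type*} [MeasurableSpace α] {μ : Measure α}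
    {f : α → α} (hf : MeasurePreserving f μ μ) {g : α → ℝ} (hg : Measurable g)
    (hgf : ∀ x, g (f x) = -g x) (hg0 : μ {x | g x = 0} = 0) {s : Set α} (hs : MeasurableSet s)
    (hfs : f ⁻¹' s = s) : 2 * μ (s ∩ {x | 0 ≤ g x}) = μ s := by
  have hneg : μ (s ∩ {x | g x < 0}) = μ (s ∩ {x | 0 < g x}) := by
    rw [← hf.measure_preimage (hs.inter (measurableSet_lt hg measurable_const)).nullMeasurableSet,
      preimage_inter, hfs]
    simp only [preimage_ofPred_eq, hgf, neg_lt_zero]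
  have hpos : μ (s ∩ {x | 0 < g x}) = μ (s ∩ {x | 0 ≤ g x}) := by
    refine le_antisymm (measure_mono (inter_subset_inter_right _ fun x (hx : 0 < g x) => hx.le)) ?_
    calc μ (s ∩ {x | 0 ≤ g x}) ≤ μ (s ∩ {x | 0 < g x} ∪ {x | g x = 0}) :=
          measure_mono fun x ⟨hxs, hx⟩ => (lt_or_eq_of_le hx).elim
            (fun h => Or.inl ⟨hxs, h⟩) (fun h => Or.inr h.symm)
      _ ≤ μ (s ∩ {x | 0 < g x}) + μ {x | g x = 0} := measure_union_le _ _
      _ = μ (s ∩ {x | 0 < g x}) := by rw [hg0, add_zero]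
  have hdiff : s \ {x | 0 ≤ g x} = s ∩ {x | g x < 0} := by
    ext x; simp [not_le]
  rw [← measure_inter_add_sdiff s (measurableSet_le measurable_const hg), hdiff, hneg, hpos,
    two_mul]

def quarterDisk (r : ℝ) : Set ℂ := Metric.closedBall 0 r ∩ {z | 0 ≤ z.re} ∩ {z | 0 ≤ z.im}

theorem volume_quarterDisk {r : ℝ} (hr : 0 ≤ r) :
    volume (quarterDisk r) = ENNReal.ofReal (π / 4 * r ^ 2) := by
  have hhalf : 2 * volume (Metric.closedBall (0 : ℂ) r ∩ {z | 0 ≤ z.re}) =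
      volume (Metric.closedBall (0 : ℂ) r) :=
    two_mul_measure_inter_setOf_nonneg
      ((LinearIsometryEquiv.neg ℝ).trans conjLIE).measurePreserving measurable_re (by simp)
      volume_setOf_re_eq_zero Metric.isClosed_closedBall.measurableSet (by ext; simp)
  have hquarter : 2 * volume (quarterDisk r) =
      volume (Metric.closedBall (0 : ℂ) r ∩ {z | 0 ≤ z.re}) :=
    two_mul_measure_inter_setOf_nonneg conjLIE.measurePreserving measurable_im (by simp)
      volume_setOf_im_eq_zero
      (Metric.isClosed_closedBall.measurableSet.inter
        (measurableSet_le measurable_const measurable_re)) (by ext; simp)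
  have h4 : 4 * volume (quarterDisk r) = 4 * ENNReal.ofReal (π / 4 * r ^ 2) := by
    rw [← ENNReal.ofReal_ofNat 4, ← ENNReal.ofReal_mul (by norm_num),
      show (4 : ℝ) * (π / 4 * r ^ 2) = π * r ^ 2 by ring, ← volume_closedBall_zero hr,
      ← hhalf, ← hquarter, ENNReal.ofReal_ofNat, ← mul_assoc]
    norm_num
  exact (ENNReal.mul_right_inj (by norm_num) (by norm_num)).mp h4

section Packing

variable {α ι : Type*} [MeasurableSpace α] {μ : Measure α} {B : ι → Set α} {K : Set α}

theorem card_mul_le_measure_of_pairwise_disjoint {v : ℝ≥0∞} (hd : Pairwise (Disjoint on B))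
    (hm : ∀ i, MeasurableSet (B i)) (hv : ∀ i, μ (B i) = v) {F : Finset ι}
    (hK : ∀ i ∈ F, B i ⊆ K) : F.card * v ≤ μ K := by
  calc (F.card : ℝ≥0∞) * v = μ (⋃ i ∈ F, B i) := by
        rw [measure_biUnion_finset (hd.set_pairwise _) fun i _ => hm i]
        simp [hv]
    _ ≤ μ K := measure_mono (iUnion₂_subset hK)

theorem finite_of_pairwise_disjoint_subset {v : ℝ≥0∞} (hd : Pairwise (Disjoint on B))
    (hm : ∀ i, MeasurableSet (B i)) (hv : ∀ i, μ (B i) = v) (hv0 : v ≠ 0) (hK : μ K ≠ ∞)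
    {P : Set ι} (hP : ∀ i ∈ P, B i ⊆ K) : P.Finite := by
  by_contra hinf
  obtain ⟨n, hn⟩ := ENNReal.exists_nat_mul_gt hv0 hK
  obtain ⟨t, htP, htfin, rfl⟩ := Set.Infinite.exists_subset_ncard_eq hinf n
  refine (card_mul_le_measure_of_pairwise_disjoint hd hm hv
    (F := htfin.toFinset) fun i hi => hP i (htP (htfin.mem_toFinset.mp hi))).not_gt ?_
  rwa [← ncard_eq_toFinset_card t htfin]

theorem ncard_mul_le_measure_of_pairwise_disjoint {v : ℝ≥0∞} (hd : Pairwise (Disjoint on B))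
    (hm : ∀ i, MeasurableSet (B i)) (hv : ∀ i, μ (B i) = v) {P : Set ι} (hP : P.Finite)
    (hK : ∀ i ∈ P, B i ⊆ K) : P.ncard * v ≤ μ K := by
  rw [ncard_eq_toFinset_card P hP]
  exact card_mul_le_measure_of_pairwise_disjoint hd hm hv fun i hi => hK i (hP.mem_toFinset.mp hi)

theorem measure_le_ncard_mul {v : ℝ≥0∞} (hv : ∀ i, μ (B i) ≤ v) {P : Set ι} (hP : P.Finite)
    (hK : K ⊆ ⋃ i ∈ P, B i) : μ K ≤ P.ncard * v := by
  calc μ K ≤ μ (⋃ i ∈ hP.toFinset, B i) := measure_mono (by simpa using hK)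
    _ ≤ ∑ i ∈ hP.toFinset, μ (B i) := measure_biUnion_finset_le _ _
    _ ≤ P.ncard * v := by
      rw [ncard_eq_toFinset_card P hP]
      simpa using Finset.sum_le_sum fun i _ => hv i

theorem abs_ncard_mul_sub_le (hd : Pairwise (Disjoint on B)) (hm : ∀ i, MeasurableSet (B i))
    {v : ℝ} (hv0 : 0 ≤ v) (hv : ∀ i, μ (B i) = ENNReal.ofReal v) {P : Set ι} (hP : P.Finite)
    {K' : Set α} {κ δ r : ℝ} (hκ : 0 ≤ κ) (hδ : 0 ≤ δ) (hδr : δ ≤ r)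
    (hK : μ K = ENNReal.ofReal (κ * (r - δ) ^ 2)) (hK' : μ K' = ENNReal.ofReal (κ * (r + δ) ^ 2))
    (hcover : K ⊆ ⋃ i ∈ P, B i) (hpack : ∀ i ∈ P, B i ⊆ K') :
    |P.ncard * v - κ * r ^ 2| ≤ 3 * κ * δ * r := by
  have hcast : (P.ncard : ℝ≥0∞) * ENNReal.ofReal v = ENNReal.ofReal (P.ncard * v) := by
    rw [ENNReal.ofReal_mul (Nat.cast_nonneg _), ENNReal.ofReal_natCast]
  have hlow : κ * (r - δ) ^ 2 ≤ P.ncard * v := by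
    have := measure_le_ncard_mul (fun i => (hv i).le) hP hcover
    rwa [hK, hcast, ENNReal.ofReal_le_ofReal_iff (by positivity)] at this
  have hup : P.ncard * v ≤ κ * (r + δ) ^ 2 := by
    have := ncard_mul_le_measure_of_pairwise_disjoint hd hm hv hP hpack
    rwa [hK', hcast, ENNReal.ofReal_le_ofReal_iff (by positivity)] at this
  have hκδ : 0 ≤ κ * δ := mul_nonneg hκ hδ
  rw [abs_le]
  constructor <;> nlinarith [mul_nonneg hκδ (sub_nonneg.mpr hδr), mul_nonneg hκδ hδ]

end Packing

theorem mem_Ico_add_mul_iff_eq_floor {a : ℝ} (ha : 0 < a) (c x : ℝ) (n : ℤ) :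
    x ∈ Ico (c + n * a) (c + n * a + a) ↔ n = ⌊(x - c) / a⌋ := by
  rw [eq_comm, Int.floor_eq_iff, le_div_iff₀ ha, div_lt_iff₀ ha, mem_Ico]
  constructor <;> rintro ⟨h₁, h₂⟩ <;> constructor <;> linarith

def latticePoint (a b c d : ℝ) (p : ℤ × ℤ) : ℂ := ⟨c + p.1 * a, d + p.2 * b⟩

def latticeCell (a b c d : ℝ) (p : ℤ × ℤ) : Set ℂ :=
  Ico (c + p.1 * a) (c + p.1 * a + a) ×ℂ Ico (d + p.2 * b) (d + p.2 * b + b)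

section Lattice

variable {a b c d : ℝ}

theorem mem_latticeCell_iff (ha : 0 < a) (hb : 0 < b) {z : ℂ} {p : ℤ × ℤ} :
    z ∈ latticeCell a b c d p ↔ p = (⌊(z.re - c) / a⌋, ⌊(z.im - d) / b⌋) := by
  rw [latticeCell, mem_reProdIm, mem_Ico_add_mul_iff_eq_floor ha,
    mem_Ico_add_mul_iff_eq_floor hb, Prod.ext_iff]

theorem mem_latticeCell_floor (ha : 0 < a) (hb : 0 < b) (c d : ℝ) (z : ℂ) :
    z ∈ latticeCell a b c d (⌊(z.re - c) / a⌋, ⌊(z.im - d) / b⌋) :=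
  (mem_latticeCell_iff ha hb).mpr rfl

theorem pairwise_disjoint_latticeCell (ha : 0 < a) (hb : 0 < b) :
    Pairwise (Disjoint on latticeCell a b c d) := fun _ _ hpq =>
  disjoint_left.mpr fun _ hp hq =>
    hpq (((mem_latticeCell_iff ha hb).mp hp).trans ((mem_latticeCell_iff ha hb).mp hq).symm)

theorem measurableSet_latticeCell (p : ℤ × ℤ) : MeasurableSet (latticeCell a b c d p) :=
  (measurable_re measurableSet_Ico).inter (measurable_im measurableSet_Ico)

theorem volume_latticeCell (ha : 0 < a) (p : ℤ × ℤ) :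
    volume (latticeCell a b c d p) = ENNReal.ofReal (a * b) := by
  rw [latticeCell, volume_reProdIm, Real.volume_Ico, Real.volume_Ico, add_sub_cancel_left,
    add_sub_cancel_left, ← ENNReal.ofReal_mul ha.le]

theorem norm_sub_latticePoint_le {z : ℂ} {p : ℤ × ℤ} (hz : z ∈ latticeCell a b c d p) :
    ‖z - latticePoint a b c d p‖ ≤ a + b := by
  obtain ⟨⟨hre₁, hre₂⟩, ⟨him₁, him₂⟩⟩ := mem_reProdIm.mp hz
  refine (norm_le_abs_re_add_abs_im _).trans (add_le_add ?_ ?_) <;>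
    simp only [latticePoint, sub_re, sub_im] <;> rw [abs_le] <;> constructor <;> linarith

theorem norm_latticePoint_le_iff {r : ℝ} (hr : 0 ≤ r) (p : ℤ × ℤ) :
    ‖latticePoint a b c d p‖ ≤ r ↔ (c + p.1 * a) ^ 2 + (d + p.2 * b) ^ 2 ≤ r ^ 2 :=
  norm_le_iff_sq_le hr

theorem norm_le_of_mem_latticeCell {z : ℂ} {p : ℤ × ℤ} (hz : z ∈ latticeCell a b c d p) :
    ‖z‖ ≤ ‖latticePoint a b c d p‖ + (a + b) :=
  (norm_le_norm_add_norm_sub' z _).trans (by linarith [norm_sub_latticePoint_le hz])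

theorem norm_latticePoint_le_of_mem {z : ℂ} {p : ℤ × ℤ} (hz : z ∈ latticeCell a b c d p) :
    ‖latticePoint a b c d p‖ ≤ ‖z‖ + (a + b) :=
  (norm_le_norm_add_norm_sub z _).trans (by linarith [norm_sub_latticePoint_le hz])

theorem finite_setOf_norm_latticePoint_le (ha : 0 < a) (hb : 0 < b) (r : ℝ) :
    {p | ‖latticePoint a b c d p‖ ≤ r}.Finite :=
  finite_of_pairwise_disjoint_subset (pairwise_disjoint_latticeCell ha hb)
    measurableSet_latticeCell (volume_latticeCell ha)
    (ENNReal.ofReal_pos.mpr (mul_pos ha hb)).ne' measure_closedBall_lt_top.ne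
    (K := Metric.closedBall 0 (r + (a + b))) fun _ hp _ hz =>
      mem_closedBall_zero_iff.mpr ((norm_le_of_mem_latticeCell hz).trans (by linarith [hp.out]))

end Lattice

section Count

variable {a b : ℝ}

theorem abs_ncard_norm_latticePoint_le_mul_sub_le (ha : 0 < a) (hb : 0 < b) (c d : ℝ) {r : ℝ}
    (hr : a + b ≤ r) :
    |({p | ‖latticePoint a b c d p‖ ≤ r}.ncard : ℝ) * (a * b) - π * r ^ 2|
      ≤ 3 * π * (a + b) * r :=
  abs_ncard_mul_sub_le (pairwise_disjoint_latticeCell ha hb) measurableSet_latticeCell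
    (mul_pos ha hb).le (volume_latticeCell ha) (finite_setOf_norm_latticePoint_le ha hb r)
    pi_pos.le (by positivity) hr (volume_closedBall_zero (by linarith))
    (volume_closedBall_zero (by linarith))
    (fun z hz => mem_biUnion (x := (⌊(z.re - c) / a⌋, ⌊(z.im - d) / b⌋))
      (show _ ≤ r by
        linarith [norm_latticePoint_le_of_mem (mem_latticeCell_floor ha hb c d z),
          mem_closedBall_zero_iff.mp hz])
      (mem_latticeCell_floor ha hb c d z))
    fun _ hp z hz =>
      mem_closedBall_zero_iff.mpr ((norm_le_of_mem_latticeCell hz).trans (by linarith [hp.out]))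

theorem abs_ncard_norm_latticePoint_natCast_le_mul_sub_le (ha : 0 < a) (hb : 0 < b) {r : ℝ}
    (hr : a + b ≤ r) :
    |({p : ℕ × ℕ | ‖latticePoint a b 0 0 (p.1, p.2)‖ ≤ r}.ncard : ℝ) * (a * b) - π / 4 * r ^ 2|
      ≤ 3 * (π / 4) * (a + b) * r := by
  have hinj : Injective fun p : ℕ × ℕ => ((p.1 : ℤ), (p.2 : ℤ)) :=
    Nat.cast_injective.prodMap Nat.cast_injective
  refine abs_ncard_mul_sub_le
    ((pairwise_disjoint_latticeCell (c := 0) (d := 0) ha hb).comp_of_injective hinj)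
    (fun _ => measurableSet_latticeCell _) (mul_pos ha hb).le (fun _ => volume_latticeCell ha _)
    ((finite_setOf_norm_latticePoint_le ha hb r).preimage hinj.injOn) (by positivity)
    (by positivity) hr (volume_quarterDisk (by linarith)) (volume_quarterDisk (by linarith))
    ?_ ?_
  · rintro z ⟨⟨hz, hre⟩, him⟩
    have hfloor :
        ((⌊z.re / a⌋₊ : ℤ), (⌊z.im / b⌋₊ : ℤ)) = (⌊(z.re - 0) / a⌋, ⌊(z.im - 0) / b⌋) := by
      rw [sub_zero, sub_zero, Int.natCast_floor_eq_floor (div_nonneg hre ha.le),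
        Int.natCast_floor_eq_floor (div_nonneg him hb.le)]
    have hcell := mem_latticeCell_floor ha hb 0 0 z
    rw [← hfloor] at hcell
    refine mem_biUnion (x := (⌊z.re / a⌋₊, ⌊z.im / b⌋₊)) (show _ ≤ r from ?_) hcell
    linarith [norm_latticePoint_le_of_mem hcell, mem_closedBall_zero_iff.mp hz]
  · intro p (hp : ‖latticePoint a b 0 0 (p.1, p.2)‖ ≤ r) z hz
    obtain ⟨⟨hre, -⟩, ⟨him, -⟩⟩ := mem_reProdIm.mp hz
    simp only [Int.cast_natCast, zero_add] at hre him
    exact ⟨⟨mem_closedBall_zero_iff.mpr ((norm_le_of_mem_latticeCell hz).trans (by linarith)),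
      (by positivity : (0 : ℝ) ≤ p.1 * a).trans hre⟩, (by positivity : (0 : ℝ) ≤ p.2 * b).trans him⟩

end Count

theorem natCard_eq_ncard_norm_latticePoint_le (a b c d : ℝ) {r : ℝ} (hr : 0 ≤ r) :
    Nat.card {p : ℤ × ℤ // (c + (p.1 : ℝ) * a) ^ 2 + (d + (p.2 : ℝ) * b) ^ 2 ≤ r ^ 2} =
      {p | ‖latticePoint a b c d p‖ ≤ r}.ncard := by
  rw [← Nat.card_coe_set_eq]
  exact Nat.card_congr (Equiv.subtypeEquivRight fun p => (norm_latticePoint_le_iff hr p).symm)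

theorem natCard_add_one_eq_ncard_norm_latticePoint_le {a b : ℝ} (ha : 0 < a) (hb : 0 < b)
    {r : ℝ} (hr : 0 ≤ r) :
    Nat.card {p : ℕ × ℕ // p ≠ (0, 0) ∧ ((p.1 : ℝ) * a) ^ 2 + ((p.2 : ℝ) * b) ^ 2 ≤ r ^ 2} + 1 =
      {p : ℕ × ℕ | ‖latticePoint a b 0 0 (p.1, p.2)‖ ≤ r}.ncard := by
  have hfin : {p : ℕ × ℕ | ‖latticePoint a b 0 0 (p.1, p.2)‖ ≤ r}.Finite :=
    (finite_setOf_norm_latticePoint_le ha hb r).preimage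
      (Nat.cast_injective.prodMap Nat.cast_injective).injOn
  rw [← ncard_sdiff_singleton_add_one (a := (0, 0))
      ((norm_latticePoint_le_iff hr _).mpr (by simp [sq_nonneg])) hfin,
    ← Nat.card_coe_set_eq]
  congr 1
  exact Nat.card_congr (Equiv.subtypeEquivRight fun p => by
    simp [norm_latticePoint_le_iff hr, and_comm])

theorem abs_natCard_add_natCard_sub_le {a b : ℝ} (ha : 0 < a) (hb : 0 < b) (c d : ℝ) {lam : ℝ}
    (hlam : max (a + b) 1 ≤ lam) :
    |(Nat.card {p : ℤ × ℤ // (c + (p.1 : ℝ) * a) ^ 2 + (d + (p.2 : ℝ) * b) ^ 2 ≤ lam ^ 2} : ℝ)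
        + Nat.card {p : ℕ × ℕ // p ≠ (0, 0) ∧ ((p.1 : ℝ) * a) ^ 2 + ((p.2 : ℝ) * b) ^ 2 ≤ lam ^ 2}
        - 5 * π / (4 * a * b) * lam ^ 2|
      ≤ (15 * π * (a + b) / 4 + a * b) / (a * b) * lam := by
  have hab : 0 < a * b := mul_pos ha hb
  have hlam₁ : a + b ≤ lam := (le_max_left _ _).trans hlam
  have hlam₂ : 1 ≤ lam := (le_max_right _ _).trans hlam
  have hdisk := abs_ncard_norm_latticePoint_le_mul_sub_le ha hb c d hlam₁
  have hquarter := abs_ncard_norm_latticePoint_natCast_le_mul_sub_le ha hb hlam₁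
  rw [← natCard_eq_ncard_norm_latticePoint_le a b c d (by linarith)] at hdisk
  rw [← natCard_add_one_eq_ncard_norm_latticePoint_le ha hb (by linarith)] at hquarter
  generalize (Nat.card {p : ℤ × ℤ // (c + (p.1 : ℝ) * a) ^ 2 + (d + (p.2 : ℝ) * b) ^ 2 ≤ lam ^ 2}
    : ℝ) = N₁ at hdisk ⊢
  generalize
    Nat.card {p : ℕ × ℕ // p ≠ (0, 0) ∧ ((p.1 : ℝ) * a) ^ 2 + ((p.2 : ℝ) * b) ^ 2 ≤ lam ^ 2} = N₂
    at hquarter ⊢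
  push_cast at hquarter
  rw [div_mul_eq_mul_div _ (a * b) lam, le_div_iff₀ hab]
  calc |N₁ + N₂ - 5 * π / (4 * a * b) * lam ^ 2| * (a * b)
      = |(N₁ + N₂ - 5 * π / (4 * a * b) * lam ^ 2) * (a * b)| := by
        rw [abs_mul, abs_of_pos hab]
    _ = |(N₁ * (a * b) - π * lam ^ 2) + ((N₂ + 1) * (a * b) - π / 4 * lam ^ 2) - a * b| := by
        congr 1
        field_simp
        ring
    _ ≤ |N₁ * (a * b) - π * lam ^ 2| + |(N₂ + 1) * (a * b) - π / 4 * lam ^ 2| + a * b := by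
        refine (abs_sub _ _).trans ?_
        rw [abs_of_pos hab]
        gcongr
        exact abs_add_le _ _
    _ ≤ (15 * π * (a + b) / 4 + a * b) * lam := by nlinarith

theorem stmt_11 (a b : ℝ) (ha : 0 < a) (hb : 0 < b) (c d : ℝ) :
    ∃ ε > (0 : ℝ),
      (fun lam : ℝ =>
          ((Nat.card {p : ℤ × ℤ //
              (c + (p.1 : ℝ) * a) ^ 2 + (d + (p.2 : ℝ) * b) ^ 2 ≤ lam ^ 2} : ℝ)
            + (Nat.card {p : ℕ × ℕ // p ≠ (0, 0) ∧
                ((p.1 : ℝ) * a) ^ 2 + ((p.2 : ℝ) * b) ^ 2 ≤ lam ^ 2} : ℝ))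
            - 5 * Real.pi / (4 * a * b) * lam ^ 2)
        =O[atTop] fun lam : ℝ => 5 * Real.pi / (4 * a * b) * lam ^ 2 * lam ^ (-ε) := by
  refine ⟨1, one_pos, ?_⟩
  have hlinear : (fun lam : ℝ => lam) =O[atTop]
      fun lam : ℝ => 5 * π / (4 * a * b) * lam ^ 2 * lam ^ (-1 : ℝ) := by
    refine (isBigO_self_const_mul (by positivity : 5 * π / (4 * a * b) ≠ 0) _ _).congr' .rfl ?_
    filter_upwards [eventually_gt_atTop 0] with lam hlam
    rw [rpow_neg_one]
    field_simp
  refine (IsBigO.of_bound ((15 * π * (a + b) / 4 + a * b) / (a * b)) ?_).trans hlinear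
  filter_upwards [eventually_ge_atTop (max (a + b) 1)] with lam hlam
  rw [Real.norm_eq_abs, Real.norm_eq_abs,
    abs_of_pos (one_pos.trans_le ((le_max_right _ _).trans hlam))]
  exact abs_natCard_add_natCard_sub_le ha hb c d hlam
end
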